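/- Let D be a finite set equipped with a score function S : D → ℝ, let k be a positive integer with k ≤ |D|, and let τ ∈ ℝ. Suppose there exist k pairwise distinct elements t^(1), …, t^(k) of D with S(t^(i)) ≥ τ for every i. Then for every t ∈ D \ {t^(1), …, t^(k)} with S(t) ≤ τ there exists a top-k answer set A of D with t ∉ A; that is, pruning any element whose score upper bound does not exceed the threshold τ still leaves at least one valid top-k answer set intact. -/

import Mathlib

/-! Take a top-`k` answer set `A` of `D \ {t}`; it exists because `T ⊆ D \ {t}` has `k` elements.
Either `A = T`, or `A` misses some `c ∈ T` and then dominates `S c ≥ τ`; in both cases every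
score in `A` is at least `τ ≥ S t`, so `A` is also a top-`k` answer set of `D` itself. -/

/-- `A` is a top-`k` answer set of `D` w.r.t. score function `S`. -/
def IsTopK {α : Type*} [DecidableEq α] (S : α → ℝ) (D : Finset α) (k : ℕ)
    (A : Finset α) : Prop :=
  A ⊆ D ∧ A.card = k ∧ ∀ a ∈ A, ∀ b ∈ D \ A, S b ≤ S a

open Finset

section

variable {α : Type*} [DecidableEq α]

theorem exists_isTopK (S : α → ℝ) {k : ℕ} {D : Finset α} (hk : k ≤ #D) :
    ∃ A, IsTopK S D k A := by
  induction k generalizing D with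
  | zero => exact ⟨∅, empty_subset D, card_empty, by simp⟩
  | succ n ih =>
    obtain ⟨m, hmD, hm_max⟩ := exists_max_image D S (card_pos.mp (by omega))
    obtain ⟨A, hAD, hAcard, hAtop⟩ :=
      ih (D := D.erase m) (by rw [card_erase_of_mem hmD]; omega)
    have hmA : m ∉ A := fun h => (mem_erase.mp (hAD h)).1 rfl
    refine ⟨insert m A, insert_subset hmD (hAD.trans (erase_subset m D)),
      by rw [card_insert_of_notMem hmA, hAcard], ?_⟩
    intro a ha b hb
    obtain ⟨hbD, hb_not⟩ := mem_sdiff.mp hb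
    obtain ⟨hbm, hbA⟩ := not_or.mp (mem_insert.not.mp hb_not)
    rcases mem_insert.mp ha with rfl | haA
    · exact hm_max b hbD
    · exact hAtop a haA b (mem_sdiff.mpr ⟨mem_erase.mpr ⟨hbm, hbD⟩, hbA⟩)

namespace IsTopK

variable {S : α → ℝ} {D A T : Finset α} {k : ℕ}

theorem forall_le_of_card_le (hA : IsTopK S D k A) (hT : T ⊆ D) (hkT : k ≤ #T) {τ : ℝ}
    (hTτ : ∀ c ∈ T, τ ≤ S c) : ∀ a ∈ A, τ ≤ S a := by
  obtain ⟨-, hAcard, hAtop⟩ := hA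
  by_cases hTA : T ⊆ A
  · rwa [eq_of_subset_of_card_le hTA (by omega)] at hTτ
  · obtain ⟨c, hcT, hcA⟩ := not_subset.mp hTA
    exact fun a ha => (hTτ c hcT).trans (hAtop a ha c (mem_sdiff.mpr ⟨hT hcT, hcA⟩))

theorem of_erase {t : α} (hA : IsTopK S (D.erase t) k A) (ht : ∀ a ∈ A, S t ≤ S a) :
    IsTopK S D k A := by
  obtain ⟨hAD, hAcard, hAtop⟩ := hA
  refine ⟨hAD.trans (erase_subset t D), hAcard, fun a ha b hb => ?_⟩
  obtain ⟨hbD, hbA⟩ := mem_sdiff.mp hb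
  by_cases hbt : b = t
  · exact hbt ▸ ht a ha
  · exact hAtop a ha b (mem_sdiff.mpr ⟨mem_erase.mpr ⟨hbt, hbD⟩, hbA⟩)

end IsTopK

end

theorem stmt_10_general {α : Type*} [DecidableEq α] (S : α → ℝ) (D : Finset α)
    (k : ℕ)
    (τ : ℝ) (T : Finset α) (hT : T ⊆ D) (hTcard : T.card = k)
    (hTscore : ∀ c ∈ T, τ ≤ S c) :
    ∀ t ∈ D \ T, S t ≤ τ → ∃ A : Finset α, IsTopK S D k A ∧ t ∉ A := by
  intro t ht htτ
  have hT_erase : T ⊆ D.erase t := fun c hc =>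
    mem_erase.mpr ⟨fun hct => (mem_sdiff.mp ht).2 (hct ▸ hc), hT hc⟩
  obtain ⟨A, hA⟩ := exists_isTopK S (D := D.erase t) (hTcard ▸ card_le_card hT_erase)
  have hAτ := hA.forall_le_of_card_le hT_erase hTcard.ge hTscore
  exact ⟨A, hA.of_erase fun a ha => htτ.trans (hAτ a ha),
    fun htA => (mem_erase.mp (hA.1 htA)).1 rfl⟩

/-- if `T` consists of `k` pairwise distinct elements of `D`
whose scores are at least `τ`, then any element of `D` outside `T` with score
at most `τ` can be pruned while still leaving some valid top-k answer set
intact. -/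
theorem stmt_10 {α : Type*} [DecidableEq α] (S : α → ℝ) (D : Finset α)
    (k : ℕ) (hk : 0 < k) (hkD : k ≤ D.card)
    (τ : ℝ) (T : Finset α) (hT : T ⊆ D) (hTcard : T.card = k)
    (hTscore : ∀ c ∈ T, τ ≤ S c) :
    ∀ t ∈ D \ T, S t ≤ τ → ∃ A : Finset α, IsTopK S D k A ∧ t ∉ A :=
  stmt_10_general S D k τ T hT hTcard hTscore
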